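/- There exists a tripartite box P with binary inputs x,y,z ∈ {0,1} and binary outputs a,b,c ∈ {0,1} satisfying the relativistic causality constraints such that ⟨CHSH⟩_{AB} + ⟨CHSH⟩_{BC} = 8, where ⟨CHSH⟩_{AB} := ⟨A₀B₀⟩ + ⟨A₀B₁⟩ + ⟨A₁B₀⟩ − ⟨A₁B₁⟩ with ⟨A_xB_y⟩ := Σ_{a,b} (−1)^{a+b} P_{AB}(a,b|x,y) computed from the Alice–Bob marginal P_{AB}(a,b|x,y) = Σ_c P(a,b,c|x,y,z) (well-defined by the constraints), and ⟨CHSH⟩_{BC} is defined analogously from the Bob–Charlie marginal P_{BC}(b,c|y,z) = Σ_a P(a,b,c|x,y,z). In particular, the no-signaling monogamy relation ⟨CHSH⟩_{AB} + ⟨CHSH⟩_{BC} ≤ 4 fails for relativistically causal boxes. -/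
import Mathlib


open Finset

/-- sign `(−1)^a` of a binary outcome. -/
def sgn (b : Bool) : ℝ := if b then -1 else 1

/-- Alice–Bob correlator `⟨A_x B_y⟩` computed from the Alice–Bob marginal
(the marginal is independent of `z` by the relativistic causality constraints;
we evaluate it at `z = false`). -/
def corrAB (P : Bool → Bool → Bool → Bool → Bool → Bool → ℝ) (x y : Bool) : ℝ :=
  ∑ a, ∑ b, sgn a * sgn b * ∑ c, P x y false a b c

/-- Bob–Charlie correlator `⟨B_y C_z⟩` computed from the Bob–Charlie marginal
(independent of `x`; evaluated at `x = false`). -/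
def corrBC (P : Bool → Bool → Bool → Bool → Bool → Bool → ℝ) (y z : Bool) : ℝ :=
  ∑ b, ∑ c, sgn b * sgn c * ∑ a, P false y z a b c

/-- **Failure of CHSH monogamy for relativistically causal boxes.** There exists a
tripartite box `P x y z a b c` with binary inputs and outputs satisfying the
relativistic causality constraints such that `⟨CHSH⟩_{AB} + ⟨CHSH⟩_{BC} = 8`. -/
theorem exists_causal_box_chsh_monogamy_violation :
    ∃ P : Bool → Bool → Bool → Bool → Bool → Bool → ℝ,
      -- tripartite box
      (∀ x y z a b c, 0 ≤ P x y z a b c) ∧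
      (∀ x y z, ∑ a, ∑ b, ∑ c, P x y z a b c = 1) ∧
      -- relativistic causality constraints
      (∀ b c y z x x', ∑ a, P x y z a b c = ∑ a, P x' y z a b c) ∧
      (∀ a b x y z z', ∑ c, P x y z a b c = ∑ c, P x y z' a b c) ∧
      (∀ a x y z y' z', ∑ b, ∑ c, P x y z a b c = ∑ b, ∑ c, P x y' z' a b c) ∧
      (∀ c z x y x' y', ∑ a, ∑ b, P x y z a b c = ∑ a, ∑ b, P x' y' z a b c) ∧
      -- ⟨CHSH⟩_{AB} + ⟨CHSH⟩_{BC} = 8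
      ((corrAB P false false + corrAB P false true + corrAB P true false
          - corrAB P true true)
        + (corrBC P false false + corrBC P false true + corrBC P true false
          - corrBC P true true) = 8) := by
  refine ⟨fun x y z a b c => if (xor a b = (x && y)) ∧ (xor b c = (y && z)) then 1/2 else 0,
    ?_, ?_, ?_, ?_, ?_, ?_, ?_⟩
  · intro x y z a b c; cases x <;> cases y <;> cases z <;> cases a <;> cases b <;> cases c <;> norm_num
  · intro x y z; cases x <;> cases y <;> cases z <;> simp [Fintype.sum_bool] <;> norm_num
  · intro b c y z x x'; cases b <;> cases c <;> cases y <;> cases z <;> cases x <;> cases x' <;> simp [Fintype.sum_bool]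
  · intro a b x y z z'; cases a <;> cases b <;> cases x <;> cases y <;> cases z <;> cases z' <;> simp [Fintype.sum_bool]
  · intro a x y z y' z'; cases a <;> cases x <;> cases y <;> cases z <;> cases y' <;> cases z' <;> simp [Fintype.sum_bool]
  · intro c z x y x' y'; cases c <;> cases z <;> cases x <;> cases y <;> cases x' <;> cases y' <;> simp [Fintype.sum_bool]
  · simp [corrAB, corrBC, sgn, Fintype.sum_bool]; norm_num
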